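/- Let S₂ = Σ_{k∈ℤ²} [(2k₁ + 1)² + (2k₂ + 1)²]^{−2}. There exist constants C > 0 and δ > 0 such that for all α > 0 and Δ > 0 with αΔ < δ, the aliased two-dimensional Matérn spectral density with ν = 1 at frequency (1/(2Δ), 1/(2Δ)) satisfies | M_Δ((1/(2Δ), 1/(2Δ)); 1, 2)/(4π/α²) − (S₂/π⁴) α⁴Δ⁴ | ≤ C α⁶Δ⁶. (Numerically π⁴/S₂ ≈ 86.2007.) -/

import Mathlib

open Real

/-- `S₂ = Σ_{k∈ℤ²} [(2k₁ + 1)² + (2k₂ + 1)²]^{-2}`. -/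
noncomputable def S2 : ℝ :=
  ∑' k : ℤ × ℤ, 1 / ((2 * (k.1 : ℝ) + 1) ^ 2 + (2 * (k.2 : ℝ) + 1) ^ 2) ^ 2

/-!
Writing `q k = (2k₁+1)² + (2k₂+1)²`, the `k`-th aliased term at the Nyquist frequency equals
`Δ⁴ / ((αΔ)² + π² q k)²`, so after normalisation the quantity to bound is
`α⁴Δ⁴ · Σₖ [1/((αΔ)² + π² q k)² - 1/(π² q k)²]`. The elementary estimate
`0 ≤ 1/a² - 1/(a+s)² ≤ 2s/a³` together with `q k ≥ 2` bounds the `k`-th bracket by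
`(αΔ)² / (π⁶ (q k)²)`, and summing gives the claim with `C = S₂/π⁶` for all `α, Δ > 0`.
-/

lemma one_div_sq_sub_one_div_add_sq_le {a s : ℝ} (ha : 0 < a) (hs : 0 ≤ s) :
    1 / a ^ 2 - 1 / (a + s) ^ 2 ≤ 2 * s / a ^ 3 := by
  rw [div_sub_div _ _ (by positivity) (by positivity),
    div_le_div_iff₀ (by positivity) (by positivity)]
  have : 0 ≤ a ^ 2 * s ^ 2 * (3 * a + 2 * s) := by positivity
  nlinarith

lemma one_le_two_mul_add_one_sq (k : ℤ) : 1 ≤ (2 * (k : ℝ) + 1) ^ 2 := by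
  rw [one_le_sq_iff_one_le_abs]
  exact_mod_cast Int.one_le_abs (by omega : 2 * k + 1 ≠ 0)

def oddNormSq (k : ℤ × ℤ) : ℝ := (2 * (k.1 : ℝ) + 1) ^ 2 + (2 * (k.2 : ℝ) + 1) ^ 2

lemma two_le_oddNormSq (k : ℤ × ℤ) : 2 ≤ oddNormSq k := by
  have := one_le_two_mul_add_one_sq k.1
  have := one_le_two_mul_add_one_sq k.2
  unfold oddNormSq; linarith

lemma summable_one_div_two_mul_add_one_sq :
    Summable fun k : ℤ => 1 / (2 * (k : ℝ) + 1) ^ 2 := by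
  have hinj : Function.Injective fun k : ℤ => 2 * k + 1 := fun a b h => by simpa using h
  refine ((Real.summable_one_div_int_pow.mpr one_lt_two).comp_injective hinj).congr fun k => ?_
  simp

lemma summable_one_div_oddNormSq_sq : Summable fun k => 1 / oddNormSq k ^ 2 := by
  have hprod := summable_one_div_two_mul_add_one_sq.mul_of_nonneg
    summable_one_div_two_mul_add_one_sq (fun _ => by positivity) (fun _ => by positivity)
  refine hprod.of_nonneg_of_le (fun _ => by positivity) fun k => ?_
  have h₁ := one_le_two_mul_add_one_sq k.1
  have h₂ := one_le_two_mul_add_one_sq k.2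
  rw [one_div_mul_one_div]
  apply one_div_le_one_div_of_le (by positivity)
  unfold oddNormSq; nlinarith

lemma S2_eq_tsum_oddNormSq : S2 = ∑' k, 1 / oddNormSq k ^ 2 := rfl

lemma S2_pos : 0 < S2 :=
  summable_one_div_oddNormSq_sq.tsum_pos (fun _ => by positivity) 0
    (one_div_pos.mpr (pow_pos (by linarith [two_le_oddNormSq 0]) 2))

lemma abs_tsum_one_div_add_oddNormSq_sq_sub_le {c s : ℝ} (hc : 0 < c) (hs : 0 ≤ s) :
    |∑' k, 1 / (s + c * oddNormSq k) ^ 2 - S2 / c ^ 2| ≤ s * S2 / c ^ 3 := by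
  set f : ℤ × ℤ → ℝ := fun k => 1 / (s + c * oddNormSq k) ^ 2
  set g : ℤ × ℤ → ℝ := fun k => 1 / (c * oddNormSq k) ^ 2
  have hq : ∀ k, 0 < c * oddNormSq k := fun k => mul_pos hc (by linarith [two_le_oddNormSq k])
  have hfg : ∀ k, f k ≤ g k := fun k =>
    one_div_le_one_div_of_le (pow_pos (hq k) 2) (pow_le_pow_left₀ (hq k).le (by linarith) 2)
  have hgf : ∀ k, g k - f k ≤ s / c ^ 3 * (1 / oddNormSq k ^ 2) := fun k => by
    have hk := two_le_oddNormSq k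
    calc g k - f k ≤ 2 * s / (c * oddNormSq k) ^ 3 := by
          simpa only [f, g, add_comm s] using one_div_sq_sub_one_div_add_sq_le (hq k) hs
      _ ≤ s / c ^ 3 * (1 / oddNormSq k ^ 2) := by
          rw [mul_pow, div_mul_div_comm, mul_one, div_le_div_iff₀ (by positivity) (by positivity)]
          have : 0 ≤ s * c ^ 3 * oddNormSq k ^ 2 := by positivity
          nlinarith
  have hg : Summable g := (summable_one_div_oddNormSq_sq.mul_left (1 / c ^ 2)).congr fun k => by
    simp only [g, mul_pow, one_div_mul_one_div]
  have hf : Summable f := hg.of_nonneg_of_le (fun _ => by positivity) hfg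
  have hS2 : S2 / c ^ 2 = ∑' k, g k := by
    rw [S2_eq_tsum_oddNormSq, ← tsum_div_const]
    exact tsum_congr fun k => by rw [div_div, mul_comm, ← mul_pow]
  rw [hS2, abs_sub_comm, ← hg.tsum_sub hf,
    abs_of_nonneg (tsum_nonneg fun k => sub_nonneg.mpr (hfg k)), mul_div_right_comm,
    S2_eq_tsum_oddNormSq, ← tsum_mul_left]
  exact Summable.tsum_le_tsum hgf (hg.sub hf) (summable_one_div_oddNormSq_sq.mul_left _)

lemma matern_nyquist_summand_eq (α : ℝ) {Δ : ℝ} (hΔ : Δ ≠ 0) (k : ℤ × ℤ) :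
    1 / (α ^ 2 + 4 * π ^ 2 * (1 / (2 * Δ) + (k.1 : ℝ) / Δ) ^ 2
        + 4 * π ^ 2 * (1 / (2 * Δ) + (k.2 : ℝ) / Δ) ^ 2) ^ 2
      = Δ ^ 4 * (1 / ((α * Δ) ^ 2 + π ^ 2 * oddNormSq k) ^ 2) := by
  have hden : α ^ 2 + 4 * π ^ 2 * (1 / (2 * Δ) + (k.1 : ℝ) / Δ) ^ 2
      + 4 * π ^ 2 * (1 / (2 * Δ) + (k.2 : ℝ) / Δ) ^ 2
      = ((α * Δ) ^ 2 + π ^ 2 * oddNormSq k) / Δ ^ 2 := by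
    unfold oddNormSq
    field_simp
    ring
  rw [hden, div_pow, one_div_div, mul_one_div, ← pow_mul]

/-- Expansion of the aliased two-dimensional Matérn (ν = 1) spectral density at
frequency (1/(2Δ), 1/(2Δ)):
`M_Δ((1/(2Δ),1/(2Δ)); 1, 2)/(4π/α²) = (S₂/π⁴) α⁴Δ⁴ + O(α⁶Δ⁶)`. -/
theorem matern_one_d2_nyquist_nyquist_expansion :
    ∃ C > (0 : ℝ), ∃ δ > (0 : ℝ), ∀ α Δ : ℝ, 0 < α → 0 < Δ → α * Δ < δ →
      |(4 * π * α ^ 2 * ∑' k : ℤ × ℤ,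
            1 / (α ^ 2 + 4 * π ^ 2 * (1 / (2 * Δ) + (k.1 : ℝ) / Δ) ^ 2
                + 4 * π ^ 2 * (1 / (2 * Δ) + (k.2 : ℝ) / Δ) ^ 2) ^ 2) / (4 * π / α ^ 2)
          - (S2 / π ^ 4) * α ^ 4 * Δ ^ 4|
        ≤ C * α ^ 6 * Δ ^ 6 := by
  refine ⟨S2 / π ^ 6, by have := S2_pos; positivity, 1, one_pos, fun α Δ hα hΔ _ => ?_⟩
  have hbound := abs_tsum_one_div_add_oddNormSq_sq_sub_le (pow_pos pi_pos 2) (sq_nonneg (α * Δ))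
  rw [tsum_congr (matern_nyquist_summand_eq α hΔ.ne'), tsum_mul_left]
  calc _ = |α ^ 4 * Δ ^ 4 *
          (∑' k, 1 / ((α * Δ) ^ 2 + π ^ 2 * oddNormSq k) ^ 2 - S2 / (π ^ 2) ^ 2)| := by
        congr 1
        field_simp
    _ = α ^ 4 * Δ ^ 4 *
          |∑' k, 1 / ((α * Δ) ^ 2 + π ^ 2 * oddNormSq k) ^ 2 - S2 / (π ^ 2) ^ 2| := by
        rw [abs_mul, abs_of_pos (by positivity)]
    _ ≤ α ^ 4 * Δ ^ 4 * ((α * Δ) ^ 2 * S2 / (π ^ 2) ^ 3) := by gcongr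
    _ = S2 / π ^ 6 * α ^ 6 * Δ ^ 6 := by ring
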